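/- arXiv:2510.22896 — 3 statements merged into one kernel-verified Lean document; each statement's English description precedes it below -/
import Mathlib

section
/- The closed interval [0,1/2] is closed under both ⋆ and ◇, and each of ⟨[0,1/2], ⋆⟩ and ⟨[0,1/2], ◇⟩ is a commutative semigroup (i.e., both operations are commutative, associative, and map [0,1/2] × [0,1/2] into [0,1/2]). -/
open scoped Classical

noncomputable def star (a b : ℝ) : ℝ := (1 - a) * b + a * (1 - b)

noncomputable def dia (a b : ℝ) : ℝ :=
  if a ∈ Set.Ioo (0:ℝ) 1 ∧ b ∈ Set.Ioo (0:ℝ) 1 then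
    a * b / (a * b + (1 - a) * (1 - b))
  else 0

/-! On `(0,1)` the odds ratio `x ↦ x / (1 - x)` turns `◇` into multiplication, so both bracketings
of `a ◇ b ◇ c` equal `abc / (abc + (1-a)(1-b)(1-c))`. Off `(0,1)²` the junk value `0` is absorbing,
so `◇` is associative on all of `ℝ`. Closure of `[0,1/2]` comes from `1 - 2(a ⋆ b) = (1-2a)(1-2b)`
and from `ab ≤ (1-a)(1-b)` whenever `a + b ≤ 1`. -/

open Set

theorem star_comm (a b : ℝ) : star a b = star b a := by
  unfold _root_.star; ring

theorem star_assoc (a b c : ℝ) : star (star a b) c = star a (star b c) := by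
  unfold _root_.star; ring

theorem one_sub_two_mul_star (a b : ℝ) : 1 - 2 * star a b = (1 - 2 * a) * (1 - 2 * b) := by
  unfold _root_.star; ring

theorem star_mem_Icc {a b : ℝ} (ha : a ∈ Icc (0:ℝ) (1/2)) (hb : b ∈ Icc (0:ℝ) (1/2)) :
    star a b ∈ Icc (0:ℝ) (1/2) := by
  have h := one_sub_two_mul_star a b
  obtain ⟨ha0, ha1⟩ := ha
  obtain ⟨hb0, hb1⟩ := hb
  constructor <;> nlinarith [mul_nonneg (by linarith : 0 ≤ 1 - 2 * a) (by linarith : 0 ≤ 1 - 2 * b)]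

theorem dia_of_mem_Ioo {a b : ℝ} (ha : a ∈ Ioo (0:ℝ) 1) (hb : b ∈ Ioo (0:ℝ) 1) :
    dia a b = a * b / (a * b + (1 - a) * (1 - b)) :=
  if_pos ⟨ha, hb⟩

theorem dia_of_notMem_Ioo_left {a : ℝ} (ha : a ∉ Ioo (0:ℝ) 1) (b : ℝ) : dia a b = 0 :=
  if_neg fun h => ha h.1

theorem dia_of_notMem_Ioo_right (a : ℝ) {b : ℝ} (hb : b ∉ Ioo (0:ℝ) 1) : dia a b = 0 :=
  if_neg fun h => hb h.2

theorem dia_comm (a b : ℝ) : dia a b = dia b a := by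
  by_cases h : a ∈ Ioo (0:ℝ) 1 ∧ b ∈ Ioo (0:ℝ) 1
  · rw [dia_of_mem_Ioo h.1 h.2, dia_of_mem_Ioo h.2 h.1]
    ring
  · rw [dia, dia, if_neg h, if_neg (h ∘ And.symm)]

theorem dia_denom_pos {a b : ℝ} (ha : a ∈ Ioo (0:ℝ) 1) (hb : b ∈ Ioo (0:ℝ) 1) :
    0 < a * b + (1 - a) * (1 - b) := by
  have := mul_pos ha.1 hb.1
  have := mul_pos (sub_pos.2 ha.2) (sub_pos.2 hb.2)
  linarith

theorem dia_mem_Ioo {a b : ℝ} (ha : a ∈ Ioo (0:ℝ) 1) (hb : b ∈ Ioo (0:ℝ) 1) :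
    dia a b ∈ Ioo (0:ℝ) 1 := by
  have hD := dia_denom_pos ha hb
  rw [dia_of_mem_Ioo ha hb]
  constructor
  · exact div_pos (mul_pos ha.1 hb.1) hD
  · rw [div_lt_one hD]
    nlinarith [mul_pos (sub_pos.2 ha.2) (sub_pos.2 hb.2)]

theorem dia_dia_of_mem_Ioo {a b c : ℝ} (ha : a ∈ Ioo (0:ℝ) 1) (hb : b ∈ Ioo (0:ℝ) 1)
    (hc : c ∈ Ioo (0:ℝ) 1) :
    dia (dia a b) c = a * b * c / (a * b * c + (1 - a) * (1 - b) * (1 - c)) := by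
  have hD := dia_denom_pos ha hb
  rw [dia_of_mem_Ioo (dia_mem_Ioo ha hb) hc, dia_of_mem_Ioo ha hb]
  field_simp
  ring_nf

theorem dia_assoc (a b c : ℝ) : dia (dia a b) c = dia a (dia b c) := by
  have h0 : (0:ℝ) ∉ Ioo (0:ℝ) 1 := fun h => lt_irrefl 0 h.1
  by_cases ha : a ∈ Ioo (0:ℝ) 1
  · by_cases hb : b ∈ Ioo (0:ℝ) 1
    · by_cases hc : c ∈ Ioo (0:ℝ) 1
      · rw [dia_dia_of_mem_Ioo ha hb hc, dia_comm a, dia_comm b, dia_dia_of_mem_Ioo hc hb ha]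
        ring_nf
      · rw [dia_of_notMem_Ioo_right _ hc, dia_of_notMem_Ioo_right b hc,
          dia_of_notMem_Ioo_right a h0]
    · rw [dia_of_notMem_Ioo_right a hb, dia_of_notMem_Ioo_left hb,
        dia_of_notMem_Ioo_left h0, dia_of_notMem_Ioo_right a h0]
  · rw [dia_of_notMem_Ioo_left ha, dia_of_notMem_Ioo_left h0, dia_of_notMem_Ioo_left ha]

theorem dia_nonneg (a b : ℝ) : 0 ≤ dia a b := by
  by_cases h : a ∈ Ioo (0:ℝ) 1 ∧ b ∈ Ioo (0:ℝ) 1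
  · exact (dia_mem_Ioo h.1 h.2).1.le
  · rw [dia, if_neg h]

theorem dia_le_half {a b : ℝ} (hab : a + b ≤ 1) : dia a b ≤ 1/2 := by
  by_cases h : a ∈ Ioo (0:ℝ) 1 ∧ b ∈ Ioo (0:ℝ) 1
  · rw [dia_of_mem_Ioo h.1 h.2, div_le_iff₀ (dia_denom_pos h.1 h.2)]
    nlinarith
  · rw [dia, if_neg h]
    norm_num

/-- `[0,1/2]` is closed under both `⋆` and `◇`, and each of them makes it a
commutative semigroup. -/
theorem stmt5 :
    ∀ a ∈ Set.Icc (0:ℝ) (1/2), ∀ b ∈ Set.Icc (0:ℝ) (1/2), ∀ c ∈ Set.Icc (0:ℝ) (1/2),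
      star a b ∈ Set.Icc (0:ℝ) (1/2) ∧
      dia a b ∈ Set.Icc (0:ℝ) (1/2) ∧
      star a b = star b a ∧
      star (star a b) c = star a (star b c) ∧
      dia a b = dia b a ∧
      dia (dia a b) c = dia a (dia b c) := by
  intro a ha b hb c _
  exact ⟨star_mem_Icc ha hb, ⟨dia_nonneg a b, dia_le_half (by linarith [ha.2, hb.2])⟩,
    star_comm a b, star_assoc a b c, dia_comm a b, dia_assoc a b c⟩
end

section
/- For each integer k ≥ 0 and each integer a with 0 ≤ a ≤ 2^k, the identity Σ_{s + 2b = 2^k - a, s,b ≥ 0} (2^k)! / (s! (a+b)! b!) · 2^s = C(2^{k+1}, 2^k - a) holds. -/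
/-!
With `n = 2 ^ k` and `m = 2 ^ k - a`, both sides are the coefficient of `X ^ m` in
`(1 + X) ^ (2 * n) = (1 + X * (X + 2)) ^ n`. Expanding binomially, the term with `t = m - b`
factors `X * (X + 2)` contributes `C(n, m - b) * C(m - b, b) * 2 ^ (m - 2 * b)`, and
`C(n, m - b) * C(m - b, b)` is the multinomial `n! / ((m - 2 * b)! * (a + b)! * b!)`.
-/

open Polynomial Finset Nat

lemma coeff_X_mul_X_add_two_pow {t m : ℕ} (h : t ≤ m) :
    ((X * (X + 2)) ^ t : ℕ[X]).coeff m = t.choose (m - t) * 2 ^ (2 * t - m) := by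
  rw [mul_pow, ← C_ofNat, coeff_X_pow_mul', if_pos h, coeff_X_add_C_pow, mul_comm]
  congr 2
  omega

lemma coeff_X_mul_X_add_two_pow_of_lt {t m : ℕ} (h : m < t) :
    ((X * (X + 2)) ^ t : ℕ[X]).coeff m = 0 := by
  rw [mul_pow, coeff_X_pow_mul', if_neg (by omega)]

lemma choose_two_mul_eq_sum_coeff (n m : ℕ) :
    (2 * n).choose m =
      ∑ t ∈ range (n + 1), n.choose t * ((X * (X + 2)) ^ t : ℕ[X]).coeff m := by
  have hsq : (X + 1 : ℕ[X]) ^ 2 = X * (X + 2) + 1 := by ring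
  have h := coeff_X_add_one_pow ℕ (2 * n) m
  rw [Nat.cast_id, pow_mul, hsq, add_pow, finsetSum_coeff] at h
  rw [← h]
  exact sum_congr rfl fun t _ ↦ by rw [one_pow, mul_one, coeff_mul_natCast, Nat.cast_id, mul_comm]

theorem sum_choose_mul_choose_mul_two_pow (n m : ℕ) :
    ∑ b ∈ range (m / 2 + 1), n.choose (m - b) * (m - b).choose b * 2 ^ (m - 2 * b)
      = (2 * n).choose m := by
  set f : ℕ → ℕ := fun t ↦ n.choose t * ((X * (X + 2)) ^ t : ℕ[X]).coeff m
  have hf_n : ∀ t ≥ n + 1, f t = 0 := fun t ht ↦ by simp [f, choose_eq_zero_of_lt ht]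
  have hf_m : ∀ t ≥ m + 1, f t = 0 := fun t ht ↦ by
    simp [f, coeff_X_mul_X_add_two_pow_of_lt ht]
  calc ∑ b ∈ range (m / 2 + 1), n.choose (m - b) * (m - b).choose b * 2 ^ (m - 2 * b)
      = ∑ b ∈ range (m + 1), n.choose (m - b) * (m - b).choose b * 2 ^ (m - 2 * b) := by
        refine (eventually_constant_sum (fun b hb ↦ ?_) (by omega)).symm
        rw [choose_eq_zero_of_lt (n := m - b) (by omega), mul_zero, zero_mul]
    _ = ∑ t ∈ range (m + 1), f t := by
        rw [← sum_range_reflect f]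
        refine sum_congr rfl fun b hb ↦ ?_
        have hb : b ≤ m := by rw [mem_range] at hb; omega
        rw [add_tsub_cancel_right]
        simp only [f]
        rw [coeff_X_mul_X_add_two_pow (by omega),
          show m - (m - b) = b by omega, show 2 * (m - b) - m = m - 2 * b by omega, mul_assoc]
    _ = ∑ t ∈ range (max (n + 1) (m + 1)), f t :=
        (eventually_constant_sum hf_m (le_max_right ..)).symm
    _ = ∑ t ∈ range (n + 1), f t := eventually_constant_sum hf_n (le_max_left ..)
    _ = (2 * n).choose m := (choose_two_mul_eq_sum_coeff n m).symm

lemma factorial_div_factorial_mul_factorial_mul_factorial {n s c b : ℕ} (h : s + c + b = n) :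
    n ! / (s ! * c ! * b !) = n.choose (s + b) * (s + b).choose b := by
  refine Nat.div_eq_of_eq_mul_left (by positivity) ?_
  have h₁ := choose_mul_factorial_mul_factorial (show s + b ≤ n by omega)
  have h₂ := choose_mul_factorial_mul_factorial (show b ≤ s + b by omega)
  rw [show n - (s + b) = c by omega] at h₁
  rw [add_tsub_cancel_right] at h₂
  rw [← h₁, ← h₂]
  ring

theorem stmt13 (k a : ℕ) (ha : a ≤ 2 ^ k) :
    ∑ b ∈ Finset.range ((2 ^ k - a) / 2 + 1),
      (2 ^ k).factorial /
        ((2 ^ k - a - 2 * b).factorial * (a + b).factorial * b.factorial) *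
        2 ^ (2 ^ k - a - 2 * b)
      = Nat.choose (2 ^ (k + 1)) (2 ^ k - a) := by
  rw [pow_succ, mul_comm, ← sum_choose_mul_choose_mul_two_pow]
  refine sum_congr rfl fun b hb ↦ ?_
  have hb : 2 * b ≤ 2 ^ k - a := by rw [mem_range] at hb; omega
  rw [factorial_div_factorial_mul_factorial_mul_factorial (by omega),
    show 2 ^ k - a - 2 * b + b = 2 ^ k - a - b by omega]
end

section
/- For every binary string α ∈ {0,1}^k define φ(α) recursively by φ(1^l) = φ(0^l) = (2^l)!·2^{2^l} for l ≥ 0, and φ(β01^l) = (2^l)!·(φ(β0))^{2^l}, φ(β10^l) = (2^l)!·(φ(β1))^{2^l}. Then for each α ∈ {0,1}^k: 2^{2^{k+1}-1} ≤ φ(α) ≤ (2^k)!·2^{2^k}, and φ(α)·2^{1-2^{k+1}} is an odd integer. -/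
/-!
Since `v₂((2n)!) = v₂(n!) + n`, we have `v₂((2^l)!) = 2^l - 1`, so the recursion
`φ(β') = (2^l)! · φ(β)^{2^l}` carries `v₂ φ(β) = 2^{k+1} - 1` to
`v₂ φ(β') = (2^l - 1) + 2^l (2^{k+1} - 1) = 2^{k+l+1} - 1`; the lower bound and the oddness of
the quotient are then just the statement that this is the exact power of `2` in `φ`.
For the upper bound, `(m n)! / (m! · (n!)^m)` counts the partitions of an `mn`-set into `m`
blocks of size `n`, so `m! · (n!)^m ≤ (mn)!`, which with `m = 2^l`, `n = 2^k` absorbs the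
factorials in the recursion.
-/

/-- `phi ls` is `φ(α)` where `ls = [t₁, …, t_r]` is the list of run lengths of the binary
string `α` (so the length of `α` is `ls.sum`).  It satisfies `phi [] = 2`,
`phi [l] = (2^l)! · 2^{2^l}` and `phi (ls ++ [l]) = (2^l)! · (phi ls)^{2^l}`, which is
exactly the recursion `φ(0^l) = φ(1^l) = (2^l)!·2^{2^l}`,
`φ(β01^l) = (2^l)!·(φ(β0))^{2^l}`, `φ(β10^l) = (2^l)!·(φ(β1))^{2^l}`. -/
def phi (ls : List ℕ) : ℕ :=
  ls.foldl (fun acc l => (2 ^ l).factorial * acc ^ (2 ^ l)) 2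

open Nat

theorem Nat.factorial_mul_factorial_pow_le_factorial_mul (m : ℕ) {n : ℕ} (hn : n ≠ 0) :
    m ! * n ! ^ m ≤ (m * n)! :=
  Nat.le_of_dvd (factorial_pos _) ⟨uniformBell m n, by rw [← uniformBell_mul_eq m hn]; ring⟩

theorem padicValNat_two_factorial_two_pow (l : ℕ) : padicValNat 2 (2 ^ l)! = 2 ^ l - 1 := by
  induction l with
  | zero => simp
  | succ l ih =>
    rw [pow_succ', padicValNat_factorial_mul, ih]
    have := Nat.one_le_two_pow (n := l)
    omega

theorem odd_div_two_pow_padicValNat {n : ℕ} (hn : n ≠ 0) : Odd (n / 2 ^ padicValNat 2 n) := by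
  rw [Nat.div_eq_of_eq_mul_left (by positivity) (divMaxPow_mul_pow_padicValNat 2 n).symm]
  exact Nat.not_even_iff_odd.mp fun h ↦ not_dvd_divMaxPow one_lt_two hn h.two_dvd

@[simp]
theorem phi_nil : phi [] = 2 := rfl

@[simp]
theorem phi_append (ls : List ℕ) (l : ℕ) :
    phi (ls ++ [l]) = (2 ^ l)! * phi ls ^ 2 ^ l := by
  simp [phi, List.foldl_append]

theorem phi_pos (ls : List ℕ) : 0 < phi ls := by
  induction ls using List.reverseRecOn with
  | nil => simp
  | append_singleton ls l ih => simp only [phi_append]; positivity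

theorem padicValNat_two_phi (ls : List ℕ) : padicValNat 2 (phi ls) = 2 ^ (ls.sum + 1) - 1 := by
  induction ls using List.reverseRecOn with
  | nil => simp
  | append_singleton ls l ih =>
    rw [phi_append, padicValNat.mul (factorial_ne_zero _) (pow_pos (phi_pos ls) _).ne',
      padicValNat.pow, padicValNat_two_factorial_two_pow, ih, List.sum_append, List.sum_singleton,
      Nat.mul_sub_one, ← pow_add, show l + (ls.sum + 1) = ls.sum + l + 1 by ring]
    have : 2 ^ l ≤ 2 ^ (ls.sum + l + 1) := Nat.pow_le_pow_right two_pos (by omega)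
    have := Nat.one_le_two_pow (n := l)
    omega

theorem phi_le (ls : List ℕ) : phi ls ≤ (2 ^ ls.sum)! * 2 ^ 2 ^ ls.sum := by
  induction ls using List.reverseRecOn with
  | nil => simp
  | append_singleton ls l ih =>
    rw [phi_append, List.sum_append, List.sum_singleton]
    calc (2 ^ l)! * phi ls ^ 2 ^ l
        ≤ (2 ^ l)! * ((2 ^ ls.sum)! * 2 ^ 2 ^ ls.sum) ^ 2 ^ l := by gcongr
      _ = (2 ^ l)! * (2 ^ ls.sum)! ^ 2 ^ l * 2 ^ 2 ^ (ls.sum + l) := by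
        rw [mul_pow, ← pow_mul, ← pow_add]; ring
      _ ≤ (2 ^ (ls.sum + l))! * 2 ^ 2 ^ (ls.sum + l) := by
        gcongr
        rw [pow_add, mul_comm (2 ^ ls.sum)]
        exact factorial_mul_factorial_pow_le_factorial_mul _ (pow_ne_zero _ two_ne_zero)

/-- For any string `α` of length `k`: `2^{2^{k+1}-1} ≤ φ(α) ≤ (2^k)!·2^{2^k}` and
`φ(α)·2^{1-2^{k+1}}` is an odd integer. -/
theorem stmt19 (ls : List ℕ) (k : ℕ) (hk : ls.sum = k) :
    2 ^ (2 ^ (k + 1) - 1) ≤ phi ls ∧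
    phi ls ≤ (2 ^ k).factorial * 2 ^ (2 ^ k) ∧
    2 ^ (2 ^ (k + 1) - 1) ∣ phi ls ∧
    Odd (phi ls / 2 ^ (2 ^ (k + 1) - 1)) := by
  subst hk
  rw [← padicValNat_two_phi]
  have hdvd : 2 ^ padicValNat 2 (phi ls) ∣ phi ls := pow_padicValNat_dvd
  exact ⟨Nat.le_of_dvd (phi_pos ls) hdvd, phi_le ls, hdvd,
    odd_div_two_pow_padicValNat (phi_pos ls).ne'⟩
end
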